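/- Let α > 2, S > 0 and r₁ > 0 be real numbers. Then ∫_{r₁}^∞ (1 − 1/(1 + S (r₁/r)^α)) · r dr = (1/2) r₁² ρ(S), where ρ(x) = x^(2/α) ∫_{x^(−2/α)}^∞ du/(1 + u^(α/2)). The identity is obtained by the change of variables u = (r/r₁)² S^(−2/α). -/

import Mathlib

/-!
The substitution `u = k r²` with `k = S^(-2/α) / r₁²` maps `(r₁, ∞)` bijectively onto
`(S^(-2/α), ∞)`, and turns the integrand `(1 - 1/(1 + S (r₁/r)^α)) r` into a constant multiple of
`(1 + u^(α/2))⁻¹ · 2 k r`. The change-of-variables formula for injective differentiable maps holds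
without integrability assumptions, so no decay estimate is required: it suffices to match the
integrands pointwise.
-/

open MeasureTheory Real

theorem integral_comp_mul_sq_Ioi {E : Type*} [NormedAddCommGroup E] [NormedSpace ℝ E]
    (g : ℝ → E) {k a : ℝ} (hk : 0 < k) (ha : 0 ≤ a) :
    ∫ r in Set.Ioi a, (2 * k * r) • g (k * r ^ 2) = ∫ u in Set.Ioi (k * a ^ 2), g u := by
  have hmono : StrictMonoOn (fun r : ℝ => k * r ^ 2) (Set.Ici a) := fun x hx y hy hxy => by
    have hx0 : 0 ≤ x := ha.trans hx
    dsimp only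
    gcongr
  have himage : (fun r : ℝ => k * r ^ 2) '' Set.Ioi a = Set.Ioi (k * a ^ 2) :=
    (continuous_const.mul (continuous_pow 2)).continuousOn.image_Ioi_of_strictMonoOn hmono
      ((Filter.tendsto_pow_atTop two_ne_zero).const_mul_atTop hk)
  have hderiv (r : ℝ) : HasDerivAt (fun r : ℝ => k * r ^ 2) (2 * k * r) r := by
    simpa [mul_comm, mul_left_comm, mul_assoc] using (hasDerivAt_pow 2 r).const_mul k
  rw [← himage, integral_image_eq_integral_abs_deriv_smul measurableSet_Ioi
    (fun r _ => (hderiv r).hasDerivWithinAt) (hmono.injOn.mono Set.Ioi_subset_Ici_self)]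
  refine setIntegral_congr_fun measurableSet_Ioi fun r hr => ?_
  have hr0 : 0 < r := ha.trans_lt hr
  rw [abs_of_pos (by positivity)]

theorem rpow_neg_two_div_mul_sq_rpow {α S x : ℝ} (hα : α ≠ 0) (hS : 0 < S) (hx : 0 < x) :
    (S ^ (-(2 / α)) * x ^ 2) ^ (α / 2) = x ^ α / S := by
  have hS_exp : -(2 / α) * (α / 2) = -1 := by field_simp
  have hx_exp : (2 : ℕ) * (α / 2) = α := by push_cast; ring
  rw [mul_rpow (by positivity) (by positivity), ← rpow_mul hS.le, hS_exp, rpow_neg_one,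
    ← rpow_natCast, ← rpow_mul hx.le, hx_exp, inv_mul_eq_div]

theorem one_sub_one_div_one_add_mul_inv_rpow {α S x : ℝ} (hα : α ≠ 0) (hS : 0 < S)
    (hx : 0 < x) :
    1 - 1 / (1 + S * x⁻¹ ^ α) = 1 / (1 + (S ^ (-(2 / α)) * x ^ 2) ^ (α / 2)) := by
  have hxα : 0 < x ^ α := by positivity
  rw [rpow_neg_two_div_mul_sq_rpow hα hS hx, inv_rpow hx.le]
  field_simp
  ring

/-- Change of variables `u = (r/r₁)² S^(−2/α)` in the Laplace functional of the aggregate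
Poisson interference: for `α > 2`, `S > 0` and `r₁ > 0`,
`∫_{r₁}^∞ (1 − 1/(1 + S (r₁/r)^α)) · r dr = (1/2) r₁² ρ(S)`,
where `ρ(x) = x^(2/α) ∫_{x^(−2/α)}^∞ du/(1 + u^(α/2))`. -/
theorem interference_integral_change_of_variables (α S r₁ : ℝ) (hα : 2 < α) (hS : 0 < S)
    (hr₁ : 0 < r₁) :
    ∫ r in Set.Ioi r₁, (1 - 1 / (1 + S * (r₁ / r) ^ α)) * r =
      (1 / 2) * r₁ ^ 2 *
        (S ^ (2 / α) * ∫ u in Set.Ioi (S ^ (-(2 / α))), 1 / (1 + u ^ (α / 2))) := by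
  set c := S ^ (-(2 / α))
  set k := c / r₁ ^ 2
  have hSc : S ^ (2 / α) * c = 1 := by rw [← rpow_add hS, add_neg_cancel, rpow_zero]
  have hkr₁ : k * r₁ ^ 2 = c := div_mul_cancel₀ c (by positivity)
  have hintegrand : ∀ r ∈ Set.Ioi r₁, (1 - 1 / (1 + S * (r₁ / r) ^ α)) * r =
      (1 / 2 * r₁ ^ 2 * S ^ (2 / α)) • ((2 * k * r) • (1 / (1 + (k * r ^ 2) ^ (α / 2)))) := by
    rintro r (hr : r₁ < r)
    have hr0 : 0 < r := hr₁.trans hr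
    have hkr : k * r ^ 2 = c * (r / r₁) ^ 2 := by ring
    rw [← inv_div r r₁, one_sub_one_div_one_add_mul_inv_rpow (by linarith) hS (by positivity),
      ← hkr, smul_eq_mul, smul_eq_mul]
    calc _ = (S ^ (2 / α) * c) * (1 / (1 + (k * r ^ 2) ^ (α / 2))) * r := by rw [hSc, one_mul]
      _ = _ := by field_simp; rw [hkr₁]
  rw [setIntegral_congr_fun measurableSet_Ioi hintegrand, integral_smul,
    integral_comp_mul_sq_Ioi (fun u => 1 / (1 + u ^ (α / 2))) (by positivity) hr₁.le, hkr₁,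
    smul_eq_mul, mul_assoc]
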